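/- Let n ≥ 1 and m ≥ 1 be integers and let w^{(1)}, …, w^{(m)} be prize structures of length n with w^{(j)}_1 > w^{(j)}_n for every j, so that each interim allocation function x_j := x_{w^{(j)}} is continuous, strictly decreasing and nonnegative on [0,1]. For t ≥ 0 define x_j^{-1}(t) := sup{φ ∈ [0,1] : x_j(φ) ≥ t} (with sup ∅ = 0), Q(t) := ∑_{j=1}^m x_j^{-1}(t), and for q ∈ [0,1] define Q^{-1}(q) := inf{t ≥ 0 : Q(t) ≤ q}. Then the functions Φ_j(q) := x_j^{-1}(Q^{-1}(q)) satisfy: each Φ_j is continuous and nondecreasing on [0,1] with values in [0,1], and ∑_{j=1}^m Φ_j(q) = q for every q ∈ [0,1]. (This is the well-definedness of the unique cumulative equilibrium choice strategy in Corollary 1 of the paper.) -/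

import Mathlib

/-- The interim allocation function of a prize vector `w` (1-indexed) with `n`
participants. -/
noncomputable def interimAlloc (n : ℕ) (w : ℕ → ℝ) (φ : ℝ) : ℝ :=
  ∑ k ∈ Finset.Icc 1 n, w k * (Nat.choose (n-1) (k-1) : ℝ) * φ^(k-1) * (1-φ)^(n-k)

/-- `w` (1-indexed) is a prize structure of length `n`:
`w_1 ≥ w_2 ≥ ⋯ ≥ w_n ≥ 0`. -/
def IsPrizeStructure (n : ℕ) (w : ℕ → ℝ) : Prop :=
  (∀ k, 1 ≤ k → k < n → w (k+1) ≤ w k) ∧ 0 ≤ w n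

/-- The generalized inverse of a nonincreasing function on `[0,1]`:
`x^{-1}(t) := sup {φ ∈ [0,1] : x(φ) ≥ t}`, with the convention `sup ∅ = 0`. -/
noncomputable def genInv (x : ℝ → ℝ) (t : ℝ) : ℝ :=
  sSup {φ | φ ∈ Set.Icc (0:ℝ) 1 ∧ t ≤ x φ}






section InterimLemmas
open Polynomial Finset

noncomputable def interimPoly (n : ℕ) (w : ℕ → ℝ) : ℝ[X] :=
  ∑ ν ∈ Finset.range n, Polynomial.C (w (ν+1)) * bernsteinPolynomial ℝ (n-1) ν

lemma interimAlloc_eq_eval (n : ℕ) (hn : 1 ≤ n) (w : ℕ → ℝ) (φ : ℝ) :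
    interimAlloc n w φ = (interimPoly n w).eval φ := by
  rw [interimAlloc, interimPoly, Polynomial.eval_finset_sum,
    show Finset.Icc 1 n = Finset.Ico 1 (n+1) by rw [Finset.Ico_add_one_right_eq_Icc],
    Finset.sum_Ico_eq_sum_range]
  have : n + 1 - 1 = n := by omega
  rw [this]
  apply Finset.sum_congr rfl
  intro ν hν
  rw [Polynomial.eval_mul, Polynomial.eval_C, bernsteinPolynomial]
  have h1 : 1 + ν - 1 = ν := by omega
  have h2 : n - (1 + ν) = n - 1 - ν := by omega
  rw [h1, h2, add_comm 1 ν]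
  simp [mul_assoc]

lemma bernstein_self_succ (M : ℕ) : bernsteinPolynomial ℝ M (M+1) = 0 := by
  rw [bernsteinPolynomial, Nat.choose_succ_self]
  simp

lemma interimPoly_derivative (M : ℕ) (w : ℕ → ℝ) :
    Polynomial.derivative (interimPoly (M+2) w) =
      Polynomial.C ((M:ℝ)+1) *
        ∑ ν ∈ Finset.range (M+1),
          Polynomial.C (w (ν+2) - w (ν+1)) * bernsteinPolynomial ℝ M ν := by
  rw [interimPoly]
  rw [map_sum]
  have hterm : ∀ ν ∈ Finset.range (M+2),
      Polynomial.derivative (Polynomial.C (w (ν+1)) * bernsteinPolynomial ℝ (M+2-1) ν)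
      = Polynomial.C (w (ν+1)) * Polynomial.derivative (bernsteinPolynomial ℝ (M+1) ν) := by
    intro ν _
    rw [Polynomial.derivative_C_mul]
    norm_num
  rw [Finset.sum_congr rfl hterm]
  rw [Finset.sum_range_succ' (fun ν => Polynomial.C (w (ν+1)) * Polynomial.derivative (bernsteinPolynomial ℝ (M+1) ν))]
  have hd0 : Polynomial.derivative (bernsteinPolynomial ℝ (M+1) 0)
      = -((M:ℝ[X])+1) * bernsteinPolynomial ℝ M 0 := by
    rw [bernsteinPolynomial.derivative_zero]
    push_cast
    ring_nf
  have hds : ∀ ν, Polynomial.derivative (bernsteinPolynomial ℝ (M+1) (ν+1))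
      = ((M:ℝ[X])+1) * (bernsteinPolynomial ℝ M ν - bernsteinPolynomial ℝ M (ν+1)) := by
    intro ν
    rw [bernsteinPolynomial.derivative_succ]
    norm_num
  rw [hd0]
  rw [Finset.sum_congr rfl (fun ν _ => by rw [hds ν])]
  -- now pure sum algebra
  have key : ∑ ν ∈ Finset.range (M+1),
        Polynomial.C (w (ν+1+1)) * (((M:ℝ[X])+1) * (bernsteinPolynomial ℝ M ν - bernsteinPolynomial ℝ M (ν+1)))
      = ((M:ℝ[X])+1) * (∑ ν ∈ Finset.range (M+1), Polynomial.C (w (ν+2)) * bernsteinPolynomial ℝ M ν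
          - ∑ ν ∈ Finset.range (M+1), Polynomial.C (w (ν+2)) * bernsteinPolynomial ℝ M (ν+1)) := by
    rw [← Finset.sum_sub_distrib, Finset.mul_sum]
    apply Finset.sum_congr rfl
    intro ν _
    ring
  rw [key]
  have shift : ∑ ν ∈ Finset.range (M+1), Polynomial.C (w (ν+2)) * bernsteinPolynomial ℝ M (ν+1)
      = ∑ ν ∈ Finset.range (M+2), Polynomial.C (w (ν+1)) * bernsteinPolynomial ℝ M ν
        - Polynomial.C (w 1) * bernsteinPolynomial ℝ M 0 := by
    rw [Finset.sum_range_succ' (fun ν => Polynomial.C (w (ν+1)) * bernsteinPolynomial ℝ M ν)]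
    simp
  rw [shift]
  have last : ∑ ν ∈ Finset.range (M+2), Polynomial.C (w (ν+1)) * bernsteinPolynomial ℝ M ν
      = ∑ ν ∈ Finset.range (M+1), Polynomial.C (w (ν+1)) * bernsteinPolynomial ℝ M ν := by
    rw [Finset.sum_range_succ, bernstein_self_succ]
    simp
  rw [last]
  have aux : ∑ ν ∈ Finset.range (M+1), Polynomial.C (w (ν+2) - w (ν+1)) * bernsteinPolynomial ℝ M ν
      = ∑ ν ∈ Finset.range (M+1), Polynomial.C (w (ν+2)) * bernsteinPolynomial ℝ M ν
        - ∑ ν ∈ Finset.range (M+1), Polynomial.C (w (ν+1)) * bernsteinPolynomial ℝ M ν := by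
    rw [← Finset.sum_sub_distrib]
    apply Finset.sum_congr rfl
    intro ν _
    rw [map_sub]
    ring
  have hC : (Polynomial.C ((M:ℝ)+1) : ℝ[X]) = ((M:ℝ[X])+1) := by
    simp [map_add, Polynomial.C_eq_natCast]
  rw [hC, aux]
  ring

lemma interim_continuous (n : ℕ) (w : ℕ → ℝ) : Continuous (interimAlloc n w) := by
  show Continuous fun φ => ∑ k ∈ Finset.Icc 1 n, w k * (Nat.choose (n-1) (k-1) : ℝ) * φ^(k-1) * (1-φ)^(n-k)
  apply continuous_finset_sum
  intro k _
  fun_prop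

lemma w_chain {n : ℕ} {w : ℕ → ℝ} (h : ∀ k, 1 ≤ k → k < n → w (k+1) ≤ w k) :
    ∀ k l, 1 ≤ k → k ≤ l → l ≤ n → w l ≤ w k := by
  intro k l h1 hkl hln
  induction l with
  | zero => omega
  | succ l ih =>
    rcases Nat.eq_or_lt_of_le hkl with he | hlt
    · rw [← he]
    · exact le_trans (h l (by omega) (by omega)) (ih (by omega) (by omega))

lemma w_nonneg {n : ℕ} {w : ℕ → ℝ} (hw : IsPrizeStructure n w) {k : ℕ}
    (h1 : 1 ≤ k) (h2 : k ≤ n) : 0 ≤ w k :=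
  le_trans hw.2 (w_chain hw.1 k n h1 h2 le_rfl)

lemma interim_nonneg {n : ℕ} {w : ℕ → ℝ} (hw : IsPrizeStructure n w) {φ : ℝ}
    (hφ : φ ∈ Set.Icc (0:ℝ) 1) : 0 ≤ interimAlloc n w φ := by
  apply Finset.sum_nonneg
  intro k hk
  rw [Finset.mem_Icc] at hk
  have h1 : 0 ≤ w k := w_nonneg hw hk.1 hk.2
  have h2 : (0:ℝ) ≤ φ^(k-1) := pow_nonneg hφ.1 _
  have h3 : (0:ℝ) ≤ (1-φ)^(n-k) := pow_nonneg (by linarith [hφ.2]) _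
  positivity

lemma interim_at_zero {n : ℕ} (hn : 1 ≤ n) (w : ℕ → ℝ) :
    interimAlloc n w 0 = w 1 := by
  rw [interimAlloc]
  rw [Finset.sum_eq_single_of_mem 1 (Finset.mem_Icc.2 ⟨le_rfl, hn⟩)]
  · norm_num
  · intro k hk hne
    rw [Finset.mem_Icc] at hk
    have : k - 1 ≠ 0 := by omega
    rw [zero_pow this]
    ring

lemma exists_drop {n : ℕ} {w : ℕ → ℝ} (hn : 1 ≤ n)
    (hmono : ∀ k, 1 ≤ k → k < n → w (k+1) ≤ w k) (hst : w n < w 1) :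
    ∃ k, 1 ≤ k ∧ k < n ∧ w (k+1) < w k := by
  by_contra hcon
  push_neg at hcon
  have h' : ∀ k, 1 ≤ k → k < n → (fun j => -w j) (k+1) ≤ (fun j => -w j) k := by
    intro k h1 h2
    simp only
    have := hcon k h1 h2
    linarith [le_antisymm (hmono k h1 h2) (hcon k h1 h2)]
  have := w_chain (w := fun j => -w j) h' 1 n le_rfl hn le_rfl
  linarith

lemma bernstein_eval_pos {M ν : ℕ} (hν : ν ≤ M) {φ : ℝ} (hφ : φ ∈ Set.Ioo (0:ℝ) 1) :
    0 < (bernsteinPolynomial ℝ M ν).eval φ := by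
  rw [bernsteinPolynomial]
  simp only [Polynomial.eval_mul, Polynomial.eval_pow, Polynomial.eval_smul,
    Polynomial.eval_X, Polynomial.eval_sub, Polynomial.eval_one, smul_eq_mul,
    Polynomial.eval_natCast]
  have h1 : (0:ℝ) < (M.choose ν : ℝ) := by
    exact_mod_cast Nat.choose_pos hν
  have h2 : (0:ℝ) < φ^ν := pow_pos hφ.1 _
  have h3 : (0:ℝ) < (1-φ)^(M-ν) := pow_pos (by linarith [hφ.2]) _
  positivity

lemma interim_deriv_neg (M : ℕ) (w : ℕ → ℝ) (hw : IsPrizeStructure (M+2) w)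
    (hst : w (M+2) < w 1) {φ : ℝ} (hφ : φ ∈ Set.Ioo (0:ℝ) 1) :
    deriv (interimAlloc (M+2) w) φ < 0 := by
  have hx : interimAlloc (M+2) w = fun ψ => (interimPoly (M+2) w).eval ψ :=
    funext fun ψ => interimAlloc_eq_eval _ (by omega) _ _
  rw [hx, Polynomial.deriv, interimPoly_derivative, Polynomial.eval_mul,
    Polynomial.eval_C, Polynomial.eval_finset_sum]
  have hMpos : (0:ℝ) < (M:ℝ) + 1 := by positivity
  apply mul_neg_of_pos_of_neg hMpos
  obtain ⟨k, hk1, hkn, hdrop⟩ := exists_drop (by omega) hw.1 hst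
  have hsum : ∑ ν ∈ Finset.range (M+1),
      ((Polynomial.C (w (ν+2) - w (ν+1)) * bernsteinPolynomial ℝ M ν).eval φ)
      < ∑ ν ∈ Finset.range (M+1), (0:ℝ) := by
    apply Finset.sum_lt_sum
    · intro ν hν
      rw [Finset.mem_range] at hν
      rw [Polynomial.eval_mul, Polynomial.eval_C]
      apply mul_nonpos_of_nonpos_of_nonneg
      · have := hw.1 (ν+1) (by omega) (by omega)
        linarith
      · exact (bernstein_eval_pos (by omega) hφ).le
    · refine ⟨k - 1, Finset.mem_range.2 (by omega), ?_⟩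
      rw [Polynomial.eval_mul, Polynomial.eval_C]
      apply mul_neg_of_neg_of_pos
      · have e1 : k - 1 + 1 = k := by omega
        have e2 : k - 1 + 2 = k + 1 := by omega
        rw [e1, e2]
        linarith
      · exact bernstein_eval_pos (by omega) hφ
  rw [Finset.sum_const_zero] at hsum
  exact hsum

lemma interim_strictAntiOn (M : ℕ) (w : ℕ → ℝ) (hw : IsPrizeStructure (M+2) w)
    (hst : w (M+2) < w 1) :
    StrictAntiOn (interimAlloc (M+2) w) (Set.Icc 0 1) := by
  apply strictAntiOn_of_deriv_neg (convex_Icc 0 1)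
    (interim_continuous _ _).continuousOn
  intro φ hφ
  rw [interior_Icc] at hφ
  exact interim_deriv_neg M w hw hst hφ




end InterimLemmas
section GenInvLemmas
open Set

lemma genInv_set_bddAbove (x : ℝ → ℝ) (t : ℝ) :
    BddAbove {φ | φ ∈ Set.Icc (0:ℝ) 1 ∧ t ≤ x φ} :=
  ⟨1, fun φ hφ => hφ.1.2⟩

lemma genInv_nonneg (x : ℝ → ℝ) (t : ℝ) : 0 ≤ genInv x t := by
  rcases eq_empty_or_nonempty {φ | φ ∈ Set.Icc (0:ℝ) 1 ∧ t ≤ x φ} with h | h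
  · rw [genInv, h]; simp
  · obtain ⟨φ, hφ⟩ := h
    exact le_trans hφ.1.1 (le_csSup (genInv_set_bddAbove x t) hφ)

lemma genInv_le_one (x : ℝ → ℝ) (t : ℝ) : genInv x t ≤ 1 := by
  rcases eq_empty_or_nonempty {φ | φ ∈ Set.Icc (0:ℝ) 1 ∧ t ≤ x φ} with h | h
  · rw [genInv, h]; simp
  · exact csSup_le h fun φ hφ => hφ.1.2

lemma genInv_mem_Icc (x : ℝ → ℝ) (t : ℝ) : genInv x t ∈ Set.Icc (0:ℝ) 1 :=
  ⟨genInv_nonneg x t, genInv_le_one x t⟩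

lemma genInv_antitone (x : ℝ → ℝ) : Antitone (genInv x) := by
  intro t t' h
  rcases eq_empty_or_nonempty {φ | φ ∈ Set.Icc (0:ℝ) 1 ∧ t' ≤ x φ} with he | hne
  · rw [genInv, he]
    simpa using genInv_nonneg x t
  · exact csSup_le_csSup (genInv_set_bddAbove x t) hne
      (fun φ hφ => ⟨hφ.1, le_trans h hφ.2⟩)

lemma genInv_mem (x : ℝ → ℝ) (hx : Continuous x) {t : ℝ}
    (h : {φ | φ ∈ Set.Icc (0:ℝ) 1 ∧ t ≤ x φ}.Nonempty) :
    genInv x t ∈ {φ | φ ∈ Set.Icc (0:ℝ) 1 ∧ t ≤ x φ} := by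
  have hc : IsClosed {φ | φ ∈ Set.Icc (0:ℝ) 1 ∧ t ≤ x φ} := by
    have : {φ | φ ∈ Set.Icc (0:ℝ) 1 ∧ t ≤ x φ} = Set.Icc 0 1 ∩ x ⁻¹' (Set.Ici t) := rfl
    rw [this]
    exact isClosed_Icc.inter (isClosed_Ici.preimage hx)
  exact hc.csSup_mem h (genInv_set_bddAbove x t)

open Set

lemma continuousAt_of_eps (g : ℝ → ℝ) (t0 : ℝ)
    (h : ∀ ε > (0:ℝ), ∃ s : Set ℝ, IsOpen s ∧ t0 ∈ s ∧ ∀ t ∈ s, |g t - g t0| ≤ ε) :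
    ContinuousAt g t0 := by
  rw [ContinuousAt, Metric.tendsto_nhds]
  intro ε hε
  obtain ⟨s, hs, ht0, hb⟩ := h (ε/2) (by linarith)
  filter_upwards [hs.mem_nhds ht0] with t ht
  rw [Real.dist_eq]
  calc |g t - g t0| ≤ ε/2 := hb t ht
    _ < ε := by linarith

lemma genInv_continuous (x : ℝ → ℝ) (hx : Continuous x)
    (ha : StrictAntiOn x (Set.Icc 0 1)) : Continuous (genInv x) := by
  have h01 : (0:ℝ) ∈ Icc (0:ℝ) 1 := by constructor <;> norm_num
  have h11 : (1:ℝ) ∈ Icc (0:ℝ) 1 := by constructor <;> norm_num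
  rw [continuous_iff_continuousAt]
  intro t0
  apply continuousAt_of_eps
  intro ε hε
  rcases le_or_gt t0 (x 1) with hcase1 | hcase1
  · -- g = 1 near and at t0
    have hval : ∀ t ≤ x 1, genInv x t = 1 := by
      intro t ht
      have : {φ | φ ∈ Set.Icc (0:ℝ) 1 ∧ t ≤ x φ} = Icc 0 1 := by
        ext φ
        simp only [mem_setOf_eq, and_iff_left_iff_imp]
        intro hφ
        rcases eq_or_lt_of_le hφ.2 with h1 | h1
        · rw [h1]; exact ht
        · exact le_trans ht (ha hφ h11 h1).le
      rw [genInv, this, csSup_Icc (by norm_num)]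
    set ε' := min ε 1 with hε'
    have hε'pos : 0 < ε' := lt_min hε (by norm_num)
    have hε'le : ε' ≤ 1 := min_le_right _ _
    have hmem : (1 - ε') ∈ Icc (0:ℝ) 1 := ⟨by linarith, by linarith⟩
    refine ⟨Iio (x (1 - ε')), isOpen_Iio, ?_, ?_⟩
    · exact lt_of_le_of_lt hcase1 (ha hmem h11 (by linarith))
    · intro t ht
      have hlb : 1 - ε' ≤ genInv x t :=
        le_csSup (genInv_set_bddAbove x t) ⟨hmem, ht.le⟩
      have hub := genInv_le_one x t
      rw [hval t0 hcase1]
      rw [abs_le]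
      constructor
      · have : ε' ≤ ε := min_le_left _ _
        linarith
      · linarith
  rcases le_or_gt (x 0) t0 with hcase2 | hcase2
  · -- g = 0 at and right of x 0
    have hval : ∀ t, x 0 ≤ t → genInv x t = 0 := by
      intro t ht
      refine le_antisymm ?_ (genInv_nonneg x t)
      rcases eq_empty_or_nonempty {φ | φ ∈ Set.Icc (0:ℝ) 1 ∧ t ≤ x φ} with he | hne
      · rw [genInv, he]; simp
      · apply csSup_le hne
        intro φ hφ
        by_contra hlt
        push_neg at hlt
        exact absurd (le_trans ht hφ.2) (not_le.2 (ha h01 hφ.1 hlt))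
    set ε' := min ε 1 with hε'
    have hε'pos : 0 < ε' := lt_min hε (by norm_num)
    have hε'le : ε' ≤ 1 := min_le_right _ _
    have hmem : ε' ∈ Icc (0:ℝ) 1 := ⟨hε'pos.le, hε'le⟩
    refine ⟨Ioi (x ε'), isOpen_Ioi, ?_, ?_⟩
    · exact lt_of_lt_of_le (ha h01 hmem hε'pos) hcase2
    · intro t ht
      have hub : genInv x t ≤ ε' := by
        rcases eq_empty_or_nonempty {φ | φ ∈ Set.Icc (0:ℝ) 1 ∧ t ≤ x φ} with he | hne
        · rw [genInv, he]; simpa using hε'pos.le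
        · apply csSup_le hne
          intro φ hφ
          by_contra hlt
          push_neg at hlt
          exact absurd (le_trans (le_of_lt ht) hφ.2)
            (not_le.2 (ha hmem hφ.1 hlt))
      have hlb := genInv_nonneg x t
      rw [hval t0 hcase2, abs_le]
      have : ε' ≤ ε := min_le_left _ _
      constructor <;> linarith
  · -- interior case : x 1 < t0 < x 0
    set φ0 := genInv x t0 with hφ0
    -- S t0 is nonempty
    have hSne : {φ | φ ∈ Set.Icc (0:ℝ) 1 ∧ t0 ≤ x φ}.Nonempty := by
      -- find small positive φ with t0 < x φ
      have hU : x ⁻¹' (Ioi t0) ∈ nhds (0:ℝ) :=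
        (isOpen_Ioi.preimage hx).mem_nhds (by simpa using hcase2)
      have hU' : x ⁻¹' (Ioi t0) ∩ Ioo 0 1 ∈ nhdsWithin (0:ℝ) (Ioi 0) :=
        Filter.inter_mem (nhdsWithin_le_nhds hU)
          (Ioo_mem_nhdsGT_of_mem ⟨le_refl 0, by norm_num⟩)
      obtain ⟨φ, hφ1, hφ2⟩ := (nhdsGT_neBot (0:ℝ)).nonempty_of_mem hU'
      exact ⟨φ, ⟨hφ2.1.le, hφ2.2.le⟩, le_of_lt hφ1⟩
    have hmemS := genInv_mem x hx hSne
    have hφ0pos : 0 < φ0 := by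
      -- there is a positive element of S
      have hU : x ⁻¹' (Ioi t0) ∈ nhds (0:ℝ) :=
        (isOpen_Ioi.preimage hx).mem_nhds (by simpa using hcase2)
      have hU' : x ⁻¹' (Ioi t0) ∩ Ioo 0 1 ∈ nhdsWithin (0:ℝ) (Ioi 0) :=
        Filter.inter_mem (nhdsWithin_le_nhds hU)
          (Ioo_mem_nhdsGT_of_mem ⟨le_refl 0, by norm_num⟩)
      obtain ⟨φ, hφ1, hφ2⟩ := (nhdsGT_neBot (0:ℝ)).nonempty_of_mem hU'
      have : φ ≤ φ0 := le_csSup (genInv_set_bddAbove x t0) ⟨⟨hφ2.1.le, hφ2.2.le⟩, hφ1.le⟩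
      exact lt_of_lt_of_le hφ2.1 this
    have hφ0lt : φ0 < 1 := by
      rcases lt_or_eq_of_le (genInv_le_one x t0) with h | h
      · exact h
      · exfalso
        exact absurd (h ▸ hmemS.2) (not_le.2 hcase1)
    set ε' := min ε (min φ0 (1 - φ0)) / 2 with hε'def
    have hε'pos : 0 < ε' := by
      apply div_pos _ (by norm_num)
      exact lt_min hε (lt_min hφ0pos (by linarith))
    have hε'lt1 : ε' < φ0 := by
      have : ε' ≤ φ0 / 2 := by
        rw [hε'def]
        apply div_le_div_of_nonneg_right _ (by norm_num)
        exact le_trans (min_le_right _ _) (min_le_left _ _)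
      linarith
    have hε'lt2 : ε' < 1 - φ0 := by
      have : ε' ≤ (1 - φ0) / 2 := by
        rw [hε'def]
        apply div_le_div_of_nonneg_right _ (by norm_num)
        exact le_trans (min_le_right _ _) (min_le_right _ _)
      linarith
    have hε'le : ε' ≤ ε := by
      have : ε' ≤ ε / 2 := by
        rw [hε'def]
        exact div_le_div_of_nonneg_right (min_le_left _ _) (by norm_num)
      linarith
    set a := φ0 - ε' with hadef
    set b := φ0 + ε' with hbdef
    have hamem : a ∈ Icc (0:ℝ) 1 := ⟨by linarith, by linarith [hmemS.1.2]⟩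
    have hbmem : b ∈ Icc (0:ℝ) 1 := ⟨by linarith [hmemS.1.1], by linarith⟩
    have hxa : t0 < x a :=
      lt_of_le_of_lt hmemS.2 (ha hamem hmemS.1 (by linarith))
    have hxb : x b < t0 := by
      by_contra hcon
      push_neg at hcon
      have : b ≤ φ0 := le_csSup (genInv_set_bddAbove x t0) ⟨hbmem, hcon⟩
      linarith
    refine ⟨Ioo (x b) (x a), isOpen_Ioo, ⟨hxb, hxa⟩, ?_⟩
    intro t ht
    have hlb : a ≤ genInv x t :=
      le_csSup (genInv_set_bddAbove x t) ⟨hamem, ht.2.le⟩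
    have hub : genInv x t ≤ b := by
      have hne' : {φ | φ ∈ Icc (0:ℝ) 1 ∧ t ≤ x φ}.Nonempty := ⟨a, hamem, ht.2.le⟩
      apply csSup_le hne'
      intro φ hφ
      by_contra hlt
      push_neg at hlt
      have : x φ < x b := ha hbmem hφ.1 hlt
      exact absurd hφ.2 (not_le.2 (lt_trans this ht.1))
    rw [abs_le]
    constructor <;> [skip; skip] <;>
      simp only [hadef, hbdef] at hlb hub <;> linarith

end GenInvLemmas

/-- Well-definedness of the unique cumulative equilibrium choice strategy in
Corollary 1 of the paper: with `m` contests whose prize structures satisfy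
`w_1 > w_n`, the functions `Φ_j(q) = x_j^{-1}(Q^{-1}(q))` are continuous,
nondecreasing, `[0,1]`-valued, and sum to `q` on `[0,1]`. -/
theorem cumulative_equilibrium_choice_strategy_well_defined
    (n m : ℕ) (hn : 1 ≤ n) (hm : 1 ≤ m)
    (w : Fin m → ℕ → ℝ) (hw : ∀ j, IsPrizeStructure n (w j))
    (hstrict : ∀ j, w j n < w j 1)
    (Q : ℝ → ℝ) (hQ : Q = fun t => ∑ j : Fin m, genInv (interimAlloc n (w j)) t)
    (Qinv : ℝ → ℝ) (hQinv : Qinv = fun q => sInf {t : ℝ | 0 ≤ t ∧ Q t ≤ q})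
    (Φ : Fin m → ℝ → ℝ)
    (hΦ : ∀ j, Φ j = fun q => genInv (interimAlloc n (w j)) (Qinv q)) :
    (∀ j, ContinuousOn (Φ j) (Set.Icc 0 1)) ∧
    (∀ j, MonotoneOn (Φ j) (Set.Icc 0 1)) ∧
    (∀ j, ∀ q ∈ Set.Icc (0:ℝ) 1, Φ j q ∈ Set.Icc (0:ℝ) 1) ∧
    (∀ q ∈ Set.Icc (0:ℝ) 1, ∑ j : Fin m, Φ j q = q) := by
  have j0 : Fin m := ⟨0, hm⟩
  have hn2 : 2 ≤ n := by
    by_contra h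
    push_neg at h
    have he : n = 1 := by omega
    have := hstrict j0
    rw [he] at this
    exact absurd this (lt_irrefl _)
  obtain ⟨M, rfl⟩ : ∃ M, n = M + 2 := ⟨n - 2, by omega⟩
  have hxc : ∀ j, Continuous (interimAlloc (M+2) (w j)) :=
    fun j => interim_continuous _ _
  have hxa : ∀ j, StrictAntiOn (interimAlloc (M+2) (w j)) (Set.Icc 0 1) :=
    fun j => interim_strictAntiOn M (w j) (hw j) (hstrict j)
  have hgc : ∀ j, Continuous (genInv (interimAlloc (M+2) (w j))) :=
    fun j => genInv_continuous _ (hxc j) (hxa j)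
  have hQc : Continuous Q := by
    rw [hQ]; exact continuous_finset_sum _ (fun j _ => hgc j)
  have hQ0 : Q 0 = m := by
    rw [hQ]
    have hone : ∀ j : Fin m, genInv (interimAlloc (M+2) (w j)) 0 = 1 := by
      intro j
      rw [genInv]
      have hset : {φ | φ ∈ Set.Icc (0:ℝ) 1 ∧ (0:ℝ) ≤ interimAlloc (M+2) (w j) φ}
          = Set.Icc 0 1 := by
        ext φ
        simp only [Set.mem_setOf_eq, and_iff_left_iff_imp]
        intro hφ
        exact interim_nonneg (hw j) hφ
      rw [hset, csSup_Icc (by norm_num)]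
    simp [hone]
  set T : ℝ := 1 + ∑ j : Fin m, w j 1 with hT
  have hw1nonneg : ∀ j : Fin m, 0 ≤ w j 1 :=
    fun j => w_nonneg (hw j) le_rfl (by omega)
  have hTnonneg : 0 ≤ T := by
    rw [hT]
    have := Finset.sum_nonneg (fun j (_ : j ∈ Finset.univ) => hw1nonneg j)
    linarith
  have hTgt : ∀ j : Fin m, interimAlloc (M+2) (w j) 0 < T := by
    intro j
    rw [interim_at_zero (by omega) (w j), hT]
    have hle : w j 1 ≤ ∑ j' : Fin m, w j' 1 :=
      Finset.single_le_sum (fun j' (_ : j' ∈ Finset.univ) => hw1nonneg j')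
        (Finset.mem_univ j)
    linarith
  have hQT : ∀ t, T ≤ t → Q t = 0 := by
    intro t ht
    rw [hQ]
    apply Finset.sum_eq_zero
    intro j _
    rw [genInv]
    have hempty : {φ | φ ∈ Set.Icc (0:ℝ) 1 ∧ t ≤ interimAlloc (M+2) (w j) φ} = ∅ := by
      ext φ
      simp only [Set.mem_setOf_eq, Set.mem_empty_iff_false, iff_false, not_and, not_le]
      intro hφ
      have h1 : interimAlloc (M+2) (w j) φ ≤ interimAlloc (M+2) (w j) 0 :=
        ((hxa j).antitoneOn) (Set.left_mem_Icc.2 (by norm_num)) hφ hφ.1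
      linarith [hTgt j]
    rw [hempty]
    exact Real.sSup_empty
  have hSclosed : ∀ q : ℝ, IsClosed {t : ℝ | 0 ≤ t ∧ Q t ≤ q} := by
    intro q
    have : {t : ℝ | 0 ≤ t ∧ Q t ≤ q} = Set.Ici 0 ∩ Q ⁻¹' (Set.Iic q) := rfl
    rw [this]
    exact isClosed_Ici.inter (isClosed_Iic.preimage hQc)
  have hSne : ∀ q : ℝ, 0 ≤ q → {t : ℝ | 0 ≤ t ∧ Q t ≤ q}.Nonempty := by
    intro q hq
    exact ⟨T, hTnonneg, by rw [hQT T le_rfl]; exact hq⟩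
  have hSbdd : ∀ q : ℝ, BddBelow {t : ℝ | 0 ≤ t ∧ Q t ≤ q} :=
    fun q => ⟨0, fun t ht => ht.1⟩
  have hQinv_mem : ∀ q : ℝ, 0 ≤ q → Qinv q ∈ {t : ℝ | 0 ≤ t ∧ Q t ≤ q} := by
    intro q hq
    rw [hQinv]
    exact (hSclosed q).csInf_mem (hSne q hq) (hSbdd q)
  have hQinv_anti : ∀ q q' : ℝ, 0 ≤ q → q ≤ q' → Qinv q' ≤ Qinv q := by
    intro q q' hq hqq
    rw [hQinv]
    exact csInf_le_csInf (hSbdd q') (hSne q hq)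
      (fun t ht => ⟨ht.1, le_trans ht.2 hqq⟩)
  have hQQinv : ∀ q ∈ Set.Icc (0:ℝ) 1, Q (Qinv q) = q := by
    intro q hq
    have hmem := hQinv_mem q hq.1
    refine le_antisymm hmem.2 ?_
    rcases eq_or_lt_of_le hmem.1 with h0 | hpos
    · rw [← h0, hQ0]
      calc q ≤ 1 := hq.2
        _ ≤ m := by exact_mod_cast hm
    · have hev : ∀ᶠ t in nhdsWithin (Qinv q) (Set.Iio (Qinv q)), q ≤ Q t := by
        filter_upwards [Ioo_mem_nhdsLT_of_mem
          (⟨hpos, le_rfl⟩ : Qinv q ∈ Set.Ioc 0 (Qinv q))] with t ht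
        by_contra hcon
        push_neg at hcon
        have : Qinv q ≤ t := by
          rw [hQinv]
          exact csInf_le (hSbdd q) ⟨ht.1.le, hcon.le⟩
        linarith [ht.2]
      exact ge_of_tendsto (hQc.continuousAt.mono_left nhdsWithin_le_nhds) hev
  have hsum : ∀ q ∈ Set.Icc (0:ℝ) 1, ∑ j : Fin m, Φ j q = q := by
    intro q hq
    have heq : ∑ j : Fin m, Φ j q = Q (Qinv q) := by
      rw [hQ]
      exact Finset.sum_congr rfl fun j _ => by rw [hΦ j]
    rw [heq, hQQinv q hq]
  have hmono : ∀ j, MonotoneOn (Φ j) (Set.Icc (0:ℝ) 1) := by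
    intro j q hqm q' hq'm hle
    simp only [hΦ j]
    exact genInv_antitone (interimAlloc (M+2) (w j)) (hQinv_anti q q' hqm.1 hle)
  have hval : ∀ j, ∀ q ∈ Set.Icc (0:ℝ) 1, Φ j q ∈ Set.Icc (0:ℝ) 1 := by
    intro j q _
    simp only [hΦ j]
    exact genInv_mem_Icc _ _
  have hlip : ∀ j, ∀ q ∈ Set.Icc (0:ℝ) 1, ∀ q' ∈ Set.Icc (0:ℝ) 1, q ≤ q' →
      Φ j q' - Φ j q ≤ q' - q := by
    intro j q hqm q' hq'm hle
    have h1 : ∑ k : Fin m, (Φ k q' - Φ k q) = q' - q := by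
      rw [Finset.sum_sub_distrib, hsum q' hq'm, hsum q hqm]
    have h2 : Φ j q' - Φ j q ≤ ∑ k : Fin m, (Φ k q' - Φ k q) := by
      apply Finset.single_le_sum (f := fun k => Φ k q' - Φ k q) ?_ (Finset.mem_univ j)
      intro k _
      have := hmono k hqm hq'm hle
      show 0 ≤ Φ k q' - Φ k q
      linarith
    linarith
  have hcont : ∀ j, ContinuousOn (Φ j) (Set.Icc (0:ℝ) 1) := by
    intro j
    apply LipschitzOnWith.continuousOn (K := 1)
    apply LipschitzOnWith.of_dist_le_mul
    intro q hqm q' hq'm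
    rw [Real.dist_eq, Real.dist_eq, NNReal.coe_one, one_mul]
    rcases le_total q q' with h | h
    · have h1 := hmono j hqm hq'm h
      have h2 := hlip j q hqm q' hq'm h
      have e1 : |Φ j q - Φ j q'| = Φ j q' - Φ j q := by
        rw [abs_sub_comm]
        exact abs_of_nonneg (by linarith)
      have e2 : |q - q'| = q' - q := by
        rw [abs_sub_comm]
        exact abs_of_nonneg (by linarith)
      rw [e1, e2]
      exact h2
    · have h1 := hmono j hq'm hqm h
      have h2 := hlip j q' hq'm q hqm h
      have e1 : |Φ j q - Φ j q'| = Φ j q - Φ j q' := abs_of_nonneg (by linarith)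
      have e2 : |q - q'| = q - q' := abs_of_nonneg (by linarith)
      rw [e1, e2]
      exact h2
  exact ⟨hcont, hmono, hval, hsum⟩
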